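/- Let K_n be the complete graph on vertices P_1, …, P_n with n ≥ 4, and let D = P_1 + ⋯ + P_n. Then for all vertices P, Q (possibly equal), the rank of D − P − Q equals 0. -/

import Mathlib

open scoped Classical

namespace GraphDiv

variable {V : Type*}

/-- The Laplacian divisor of an integer-valued function on the vertices. -/
noncomputable def lap (G : SimpleGraph V) [Fintype V] (f : V → ℤ) : V → ℤ :=
  fun P => ∑ Q : V, if G.Adj P Q then f P - f Q else 0

/-- Linear equivalence of divisors: `D ∼ D'` iff `D - D' = Δ(f)` for some `f`. -/
def LinEquiv (G : SimpleGraph V) [Fintype V] (D D' : V → ℤ) : Prop :=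
  ∃ f : V → ℤ, D - D' = lap G f

/-- A divisor is effective if all its coefficients are nonnegative. -/
def Effective (D : V → ℤ) : Prop := ∀ P, 0 ≤ D P

/-- The degree of a divisor. -/
def degDiv [Fintype V] (D : V → ℤ) : ℤ := ∑ P : V, D P

/-- The complete linear system of a divisor. -/
def linSys (G : SimpleGraph V) [Fintype V] (D : V → ℤ) : Set (V → ℤ) :=
  {E | Effective E ∧ LinEquiv G E D}

/-- `RankEq G D r` says the Baker–Norine rank of `D` equals `r`. -/
def RankEq (G : SimpleGraph V) [Fintype V] (D : V → ℤ) (r : ℤ) : Prop :=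
  -1 ≤ r ∧
  (∀ E : V → ℤ, Effective E → degDiv E ≤ r → (linSys G (D - E)).Nonempty) ∧
  ∃ E : V → ℤ, Effective E ∧ degDiv E = r + 1 ∧ linSys G (D - E) = ∅

/-- The divisor consisting of a single vertex. -/
noncomputable def unit (P : V) : V → ℤ := fun Q => if Q = P then 1 else 0

/-- A graph is 2-edge-connected if it is connected and stays connected
after removing any single edge. -/
def TwoEdgeConnected (G : SimpleGraph V) : Prop :=
  G.Connected ∧ ∀ v w : V, G.Adj v w → (G.deleteEdges {s(v, w)}).Connected

/-- Action of a graph automorphism on divisors. -/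
def divAct {G : SimpleGraph V} (σ : G ≃g G) (D : V → ℤ) : V → ℤ :=
  fun v => D (σ.symm v)

/-- Two vertices lie in the same orbit of a subgroup of automorphisms. -/
def vrel {G : SimpleGraph V} (H : Subgroup (G ≃g G)) (v w : V) : Prop :=
  ∃ σ ∈ H, σ v = w

/-- An edge is collapsed in the quotient: its endpoints lie in the same vertex orbit. -/
def Collapsed {G : SimpleGraph V} (H : Subgroup (G ≃g G)) (e : Sym2 V) : Prop :=
  ∃ a b : V, e = s(a, b) ∧ vrel H a b

/-- The quotient morphism `G → G/H` is harmonic: for every vertex `P`, the number of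
edges at `P` lying above a given non-collapsed edge-orbit incident to the class of `P`
is independent of the choice of that edge-orbit. -/
def QuotHarmonic (G : SimpleGraph V) (H : Subgroup (G ≃g G)) : Prop :=
  ∀ (P : V) (e₁ e₂ : Sym2 V), e₁ ∈ G.edgeSet → e₂ ∈ G.edgeSet →
    (∃ σ ∈ H, P ∈ Sym2.map (⇑σ) e₁) → (∃ σ ∈ H, P ∈ Sym2.map (⇑σ) e₂) →
    ¬ Collapsed H e₁ → ¬ Collapsed H e₂ →
    Nat.card {e : Sym2 V // e ∈ G.edgeSet ∧ P ∈ e ∧ ∃ σ ∈ H, Sym2.map (⇑σ) e = e₁} =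
    Nat.card {e : Sym2 V // e ∈ G.edgeSet ∧ P ∈ e ∧ ∃ σ ∈ H, Sym2.map (⇑σ) e = e₂}

/-- `H` acts harmonically on `G`: for every subgroup `Δ ≤ H` the quotient morphism
`G → G/Δ` is harmonic. -/
def HarmonicAction (G : SimpleGraph V) (H : Subgroup (G ≃g G)) : Prop :=
  ∀ Δ : Subgroup (G ≃g G), Δ ≤ H → QuotHarmonic G Δ

/-- `P` is a Galois point with respect to `|D|`. -/
def IsGaloisPoint (G : SimpleGraph V) [Fintype V] (D : V → ℤ) (P : V) : Prop :=
  RankEq G (D - unit P) 1 ∧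
  (∀ Q : V, RankEq G (D - unit P - unit Q) 0) ∧
  ∃ H : Subgroup (G ≃g G), (Nat.card H : ℤ) = degDiv D - 1 ∧
    (∃ v w : V, ¬ vrel H v w) ∧
    HarmonicAction G H ∧
    ∃ E₁ E₂ : V → ℤ, E₁ ≠ E₂ ∧ E₁ ∈ linSys G (D - unit P) ∧ E₂ ∈ linSys G (D - unit P) ∧
      ∀ σ ∈ H, divAct σ E₁ = E₁ ∧ divAct σ E₂ = E₂

/-- A divisor is `q`-reduced. -/
def QReduced (G : SimpleGraph V) [Fintype V] (q : V) (D : V → ℤ) : Prop :=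
  (∀ P : V, P ≠ q → 0 ≤ D P) ∧
  ∀ S : Finset V, S.Nonempty → q ∉ S →
    ∃ P ∈ S, D P < (((G.neighborFinset P).filter (fun Q => Q ∉ S)).card : ℤ)

/-- The wheel graph on `m + 1` vertices: hub `none` and rim `some i` for `i : Fin m`,
with the rim a cycle via `i ↦ i + 1 (mod m)`. -/
def wheel (m : ℕ) : SimpleGraph (Option (Fin m)) where
  Adj v w :=
    match v, w with
    | none, none => False
    | none, some _ => True
    | some _, none => True
    | some i, some j => i ≠ j ∧ ((i.val + 1) % m = j.val ∨ (j.val + 1) % m = i.val)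
  symm := ⟨by
    intro v w h
    cases v <;> cases w <;> simp_all <;> tauto⟩
  loopless := ⟨by intro v; cases v <;> simp⟩

/-- The 4-cycle `P₁P₂P₃P₄` with the chord `P₁P₃` (vertices `0,1,2,3`). -/
def g4 : SimpleGraph (Fin 4) :=
  SimpleGraph.fromRel (fun v w =>
    (v = 0 ∧ w = 1) ∨ (v = 1 ∧ w = 2) ∨ (v = 2 ∧ w = 3) ∨ (v = 3 ∧ w = 0) ∨ (v = 0 ∧ w = 2))

end GraphDiv

/-!
On `K_n` the Laplacian of `f` is `n f - ∑ f`, so after shifting `f` to be nonnegative with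
minimum `0` at some `v₀`, a divisor `E ∼ D` reads `E = D + n g - ∑ g` with `g ≥ 0`, `g v₀ = 0`.
Effectiveness at `v₀` forces `∑ g ≤ D v₀ ≤ 1`, while every vertex where `D - ∑ g` is negative
needs `g ≥ 1`. For `D = P₁ + ⋯ + P_n - P - Q - R` with `R` chosen so that `D` has a `-1` and a
further `0`, this forces `∑ g ≥ 2`; hence `|D - P - Q - R| = ∅`. On the other hand
`D - P - Q` is effective, or equivalent to an effective divisor via `Δ(P)` when `P = Q`.
-/

namespace GraphDiv

variable {V : Type*}

lemma effective_unit (P : V) : Effective (unit P) := by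
  intro v
  unfold unit
  split_ifs <;> norm_num

variable [Fintype V]

lemma lap_sub_const (G : SimpleGraph V) (f : V → ℤ) (c : ℤ) :
    lap G (fun v => f v - c) = lap G f := by
  funext v
  simp only [lap, sub_sub_sub_cancel_right]

lemma lap_top_apply (f : V → ℤ) (v : V) :
    lap ⊤ f v = Fintype.card V * f v - ∑ w, f w := by
  calc lap ⊤ f v = ∑ w, (f v - f w) :=
        Finset.sum_congr rfl fun w _ => by by_cases h : v = w <;> simp [h]
    _ = Fintype.card V * f v - ∑ w, f w := by
        rw [Finset.sum_sub_distrib, Finset.sum_const, Finset.card_univ, nsmul_eq_mul]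

lemma degDiv_unit (P : V) : degDiv (unit P) = 1 := by
  simp [degDiv, unit]

lemma Effective.eq_zero_of_degDiv_nonpos {E : V → ℤ} (hE : Effective E) (h : degDiv E ≤ 0) :
    E = 0 := by
  have hsum : ∑ v, E v = 0 := le_antisymm h (Finset.sum_nonneg fun v _ => hE v)
  funext v
  exact (Finset.sum_eq_zero_iff_of_nonneg fun v _ => hE v).mp hsum v (Finset.mem_univ v)

lemma rankEq_zero_of_nonempty_of_eq_empty (G : SimpleGraph V) {D : V → ℤ}
    (hD : (linSys G D).Nonempty) (R : V) (hR : linSys G (D - unit R) = ∅) :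
    RankEq G D 0 := by
  refine ⟨by norm_num, fun E hE hdeg => ?_, unit R, effective_unit R, by simp [degDiv_unit], hR⟩
  rwa [hE.eq_zero_of_degDiv_nonpos hdeg, sub_zero]

lemma exists_potential_of_linEquiv_top [Nonempty V] {E D : V → ℤ} (h : LinEquiv ⊤ E D) :
    ∃ g : V → ℤ, (∀ v, 0 ≤ g v) ∧ (∃ v₀, g v₀ = 0) ∧
      ∀ v, E v = D v + (Fintype.card V * g v - ∑ w, g w) := by
  obtain ⟨f, hf⟩ := h
  obtain ⟨v₀, -, hv₀⟩ := Finset.univ.exists_min_image f Finset.univ_nonempty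
  refine ⟨fun v => f v - f v₀, fun v => sub_nonneg.mpr (hv₀ v (Finset.mem_univ v)),
    ⟨v₀, sub_self _⟩, fun v => ?_⟩
  have hv := congrFun hf v
  rw [Pi.sub_apply, ← lap_sub_const _ _ (f v₀), lap_top_apply] at hv
  linarith

lemma linSys_top_eq_empty {D : V → ℤ} {a b : V} (hab : a ≠ b) (hD : ∀ v, D v ≤ 1)
    (ha : D a ≤ -1) (hb : D b ≤ 0) : linSys ⊤ D = ∅ := by
  have : Nonempty V := ⟨a⟩
  refine Set.eq_empty_of_forall_notMem fun E ⟨hE, hED⟩ => ?_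
  obtain ⟨g, hg, ⟨v₀, hv₀⟩, hEg⟩ := exists_potential_of_linEquiv_top hED
  set S := ∑ w, g w
  have hS_le : S ≤ 1 := by
    have hEv₀ := hEg v₀
    rw [hv₀, mul_zero] at hEv₀
    linarith [hE v₀, hD v₀]
  have pos_of_neg : ∀ v, D v - S < 0 → 1 ≤ g v := fun v hv => by
    by_contra! h
    have hEv := hEg v
    rw [le_antisymm (by omega) (hg v), mul_zero] at hEv
    linarith [hE v]
  have hpair : g a + g b ≤ S := by
    rw [← Finset.sum_pair hab]
    exact Finset.sum_le_sum_of_subset_of_nonneg (Finset.subset_univ _) fun v _ _ => hg v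
  have hga : 1 ≤ g a := pos_of_neg a (by linarith [hpair, hg b, hg a])
  have hgb : 1 ≤ g b := pos_of_neg b (by linarith [hpair, hg b])
  linarith

lemma linSys_top_sub_unit_sub_unit_nonempty (hV : 2 ≤ Fintype.card V) (P Q : V) :
    (linSys ⊤ ((fun _ => 1) - unit P - unit Q)).Nonempty := by
  by_cases hPQ : P = Q
  · subst hPQ
    refine ⟨(fun _ => 1) - unit P - unit P + lap ⊤ (unit P), fun v => ?_, unit P, by ring⟩
    have hV' : (2 : ℤ) ≤ Fintype.card V := by exact_mod_cast hV
    have hsum : ∑ w, unit P w = 1 := degDiv_unit P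
    simp only [Pi.add_apply, Pi.sub_apply, lap_top_apply, hsum]
    by_cases hv : v = P
    · simp only [unit, hv, if_true]
      linarith
    · simp [unit, hv]
  · refine ⟨(fun _ => 1) - unit P - unit Q, fun v => ?_, 0, by ext v; simp [lap_top_apply]⟩
    by_cases hvP : v = P <;> by_cases hvQ : v = Q <;> simp_all [unit]

lemma exists_linSys_top_sub_unit_eq_empty [Nontrivial V] (P Q : V) :
    ∃ R, linSys ⊤ ((fun _ => 1) - unit P - unit Q - unit R) = ∅ := by
  by_cases hPQ : P = Q
  · subst hPQ
    obtain ⟨R, hRP⟩ := exists_ne P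
    refine ⟨R, linSys_top_eq_empty hRP.symm (fun v => ?_) ?_ ?_⟩
    · simp only [Pi.sub_apply, unit]
      split_ifs <;> norm_num
    all_goals simp [unit, hRP, hRP.symm]
  · refine ⟨Q, linSys_top_eq_empty (Ne.symm hPQ) (fun v => ?_) ?_ ?_⟩
    · simp only [Pi.sub_apply, unit]
      split_ifs <;> norm_num
    all_goals simp [unit, hPQ, Ne.symm hPQ]

end GraphDiv

open GraphDiv in
/-- On `K_n` (`n ≥ 4`), `r(D - P - Q) = 0` for all vertices `P, Q`. -/
theorem stmt6 (n : ℕ) (hn : 4 ≤ n) (P Q : Fin n) :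
    RankEq (⊤ : SimpleGraph (Fin n)) ((fun _ => 1) - unit P - unit Q) 0 := by
  have hcard : 2 ≤ Fintype.card (Fin n) := by simp only [Fintype.card_fin]; omega
  have : Nontrivial (Fin n) := Fintype.one_lt_card_iff_nontrivial.mp hcard
  obtain ⟨R, hR⟩ := exists_linSys_top_sub_unit_eq_empty P Q
  exact rankEq_zero_of_nonempty_of_eq_empty ⊤
    (linSys_top_sub_unit_sub_unit_nonempty hcard P Q) R hR
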